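/- arXiv:1306.5417 — 3 statements merged into one kernel-verified Lean document; each statement's English description precedes it below -/
import Mathlib

section
/- Let $n \geq 1$, let $\lambda_1,\dots,\lambda_n > 0$ with $\bar{\lambda} = \max_i \lambda_i$ and $\underline{\lambda} = \min_i \lambda_i$, and assume $2\underline{\lambda} < n$. Let $Y_1,\dots,Y_n$ be i.i.d. exponential random variables with rate $n$ and set $Z = \mathbf{1}_{\{\sum_{i=1}^n Y_i \leq 1\}} \cdot \prod_{i=1}^n \frac{\lambda_i e^{-\lambda_i Y_i}}{n e^{-n Y_i}}$. Then $\frac{\mathbb{E}[Z^2]}{(\mathbb{E}[Z])^2} \leq \sqrt{n}\, e^{2(\bar{\lambda} - \underline{\lambda}) + 1}$. -/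
/-!
Write `A = {y ≥ 0, ∑ yᵢ ≤ 1}` and `c = ∏ λᵢ`. Changing measure from `Exp(n)^⊗n` to Lebesgue measure
gives `𝔼[Z] = ∫_A c e^{-⟨λ, y⟩} dy` and `𝔼[Z²] = ∫_A c² n⁻ⁿ e^{⟨n - 2λ, y⟩} dy`. On `A` the first
integrand is at least `c e^{-λ̄}` and, as `2 λ_min < n`, the second is at most
`c² n⁻ⁿ e^{n - 2 λ_min}`, so the ratio is at most `e^{n - 2 λ_min + 2 λ̄} / (nⁿ |A|)`. Finally
`|A| ≥ 1 / n!` (slice off one coordinate at a time) and Stirling's bound `n! ≤ √n nⁿ e^{1 - n}`.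
-/

open MeasureTheory ProbabilityTheory Real
open scoped ENNReal Nat

namespace MeasureTheory

theorem lintegral_fin_nat_prod_eq_prod {n : ℕ} {E : Type*} [MeasurableSpace E]
    {μ : Fin n → Measure E} [∀ i, SigmaFinite (μ i)]
    {f : Fin n → E → ℝ≥0∞} (hf : ∀ i, Measurable (f i)) :
    ∫⁻ x : Fin n → E, ∏ i, f i (x i) ∂(Measure.pi μ) = ∏ i, ∫⁻ x, f i x ∂(μ i) := by
  induction n with
  | zero => simp
  | succ n ih =>
    calc
      _ = ∫⁻ x : E × (Fin n → E), f 0 x.1 * ∏ i : Fin n, f i.succ (x.2 i)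
            ∂((μ 0).prod (Measure.pi (fun i ↦ μ i.succ))) := by
        rw [← ((measurePreserving_piFinSuccAbove μ 0).symm).lintegral_comp_emb
          (MeasurableEquiv.measurableEmbedding _)]
        simp_rw [MeasurableEquiv.piFinSuccAbove_symm_apply, Fin.insertNthEquiv,
          Fin.prod_univ_succ, Fin.insertNth_zero, Equiv.coe_fn_mk, Fin.cons_succ,
          Fin.zero_succAbove, cast_eq, Fin.cons_zero]
      _ = (∫⁻ x, f 0 x ∂μ 0) * ∏ i : Fin n, ∫⁻ x, f i.succ x ∂(μ i.succ) := by
        rw [← ih fun i : Fin n ↦ hf i.succ]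
        exact lintegral_prod_mul (hf 0).aemeasurable
          (Finset.measurable_prod _ fun (i : Fin n) _ ↦
            (hf i.succ).comp (measurable_pi_apply i)).aemeasurable
      _ = ∏ i, ∫⁻ x, f i x ∂(μ i) := by rw [Fin.prod_univ_succ]

theorem lintegral_fintype_prod_eq_prod {ι : Type*} [Fintype ι] {E : Type*} [MeasurableSpace E]
    {μ : ι → Measure E} [∀ i, SigmaFinite (μ i)]
    {f : ι → E → ℝ≥0∞} (hf : ∀ i, Measurable (f i)) :
    ∫⁻ x : ι → E, ∏ i, f i (x i) ∂(Measure.pi μ) = ∏ i, ∫⁻ x, f i x ∂(μ i) := by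
  let e := (Fintype.equivFin ι).symm
  rw [← (measurePreserving_piCongrLeft _ e).lintegral_comp_emb
    (MeasurableEquiv.measurableEmbedding _)]
  simp_rw [← e.prod_comp, MeasurableEquiv.coe_piCongrLeft, Equiv.piCongrLeft_apply_apply]
  exact lintegral_fin_nat_prod_eq_prod fun i ↦ hf (e i)

theorem Measure.pi_withDensity {ι : Type*} [Fintype ι] {E : Type*} [MeasurableSpace E]
    {μ : ι → Measure E} [∀ i, SigmaFinite (μ i)]
    {f : ι → E → ℝ≥0∞} (hf : ∀ i, Measurable (f i))
    [∀ i, SigmaFinite ((μ i).withDensity (f i))] :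
    Measure.pi (fun i ↦ (μ i).withDensity (f i))
      = (Measure.pi μ).withDensity (fun x ↦ ∏ i, f i (x i)) := by
  refine Measure.pi_eq fun s hs ↦ ?_
  rw [withDensity_apply _ (.univ_pi hs), ← lintegral_indicator (.univ_pi hs)]
  have : (Set.univ.pi s).indicator (fun x ↦ ∏ i, f i (x i))
      = fun x ↦ ∏ i, (s i).indicator (f i) (x i) := by
    ext x
    by_cases h : ∀ i, x i ∈ s i
    · rw [Set.indicator_of_mem (by simpa using h)]
      exact Finset.prod_congr rfl fun i _ ↦ (Set.indicator_of_mem (h i) _).symm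
    · obtain ⟨i, hi⟩ := not_forall.1 h
      rw [Set.indicator_of_notMem (by simpa using h)]
      exact (Finset.prod_eq_zero (Finset.mem_univ i) (Set.indicator_of_notMem hi _)).symm
  simp_rw [this, lintegral_fintype_prod_eq_prod fun i ↦ (hf i).indicator (hs i),
    lintegral_indicator (hs _), withDensity_apply _ (hs _)]

end MeasureTheory

namespace ProbabilityTheory

variable {ι : Type*} [Fintype ι] {r : ℝ}

@[fun_prop]
lemma measurable_exponentialPDF (r : ℝ) : Measurable (exponentialPDF r) :=
  (measurable_exponentialPDFReal r).ennreal_ofReal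

lemma pi_expMeasure_eq_withDensity (hr : 0 < r) :
    Measure.pi (fun _ : ι ↦ expMeasure r)
      = volume.withDensity fun y ↦ ∏ i, exponentialPDF r (y i) := by
  have : IsProbabilityMeasure ((volume : Measure ℝ).withDensity (exponentialPDF r)) :=
    isProbabilityMeasure_expMeasure hr
  rw [volume_pi, ← Measure.pi_withDensity fun _ ↦ measurable_exponentialPDF r]
  rfl

lemma prod_exponentialPDFReal_of_nonneg {y : ι → ℝ} (hy : ∀ i, 0 ≤ y i) :
    ∏ i, exponentialPDFReal r (y i) = r ^ Fintype.card ι * exp (-(r * ∑ i, y i)) := by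
  simp_rw [exponentialPDFReal, gammaPDFReal, if_pos (hy _)]
  simp [Finset.prod_mul_distrib, ← exp_sum, Finset.mul_sum]

variable {Ω : Type*} [MeasureSpace Ω] {Y : ι → Ω → ℝ}

lemma integral_comp_eq_integral_prod_exponentialPDFReal (hr : 0 < r)
    (hYmeas : ∀ i, Measurable (Y i)) (hYindep : iIndepFun Y ℙ)
    (hYdist : ∀ i, Measure.map (Y i) ℙ = expMeasure r) {h : (ι → ℝ) → ℝ} (hh : Measurable h) :
    ∫ ω, h (fun i ↦ Y i ω) = ∫ y, (∏ i, exponentialPDFReal r (y i)) * h y := by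
  rw [← integral_map (measurable_pi_lambda _ hYmeas).aemeasurable hh.aestronglyMeasurable,
    hYindep.map_fun_eq_pi_map fun i ↦ (hYmeas i).aemeasurable]
  simp_rw [hYdist]
  rw [pi_expMeasure_eq_withDensity hr, integral_withDensity_eq_integral_toReal_smul
    (f := fun y : ι → ℝ ↦ ∏ i, exponentialPDF r (y i)) (by fun_prop)
    (ae_of_all _ fun y ↦ ENNReal.prod_lt_top fun i _ ↦ ENNReal.ofReal_lt_top)]
  simp_rw [ENNReal.toReal_prod, exponentialPDF, ENNReal.toReal_ofReal
    (exponentialPDFReal_nonneg hr _), smul_eq_mul]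

end ProbabilityTheory

lemma integral_sub_pow_div_factorial (k : ℕ) (t : ℝ) :
    ∫ a in (0 : ℝ)..t, (t - a) ^ k / k ! = t ^ (k + 1) / (k + 1)! := by
  rw [intervalIntegral.integral_div, intervalIntegral.integral_comp_sub_left (fun x ↦ x ^ k),
    sub_self, sub_zero, integral_pow, Nat.factorial_succ, zero_pow k.succ_ne_zero, sub_zero]
  push_cast
  field_simp

def solidSimplex (ι : Type*) [Fintype ι] (t : ℝ) : Set (ι → ℝ) :=
  {y | (∀ i, 0 ≤ y i) ∧ ∑ i, y i ≤ t}

section SolidSimplex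

variable {ι : Type*} [Fintype ι]

lemma solidSimplex_subset_pi_Icc (t : ℝ) :
    solidSimplex ι t ⊆ Set.univ.pi fun _ ↦ Set.Icc 0 t := fun _ hy i _ ↦
  ⟨hy.1 i, (Finset.single_le_sum (fun j _ ↦ hy.1 j) (Finset.mem_univ i)).trans hy.2⟩

lemma isCompact_solidSimplex (t : ℝ) : IsCompact (solidSimplex ι t) := by
  refine (isCompact_univ_pi fun _ ↦ isCompact_Icc).of_isClosed_subset ?_
    (solidSimplex_subset_pi_Icc t)
  simp only [solidSimplex, Set.ofPred_and, Set.ofPred_forall]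
  exact (isClosed_iInter fun i ↦ isClosed_le continuous_const (continuous_apply i)).inter
    (isClosed_le (by fun_prop) continuous_const)

lemma sum_mul_le_of_mem_solidSimplex {t M : ℝ} {a y : ι → ℝ} (hy : y ∈ solidSimplex ι t)
    (ha : ∀ i, a i ≤ M) (hM : 0 ≤ M) : ∑ i, a i * y i ≤ M * t :=
  calc ∑ i, a i * y i ≤ ∑ i, M * y i :=
        Finset.sum_le_sum fun i _ ↦ mul_le_mul_of_nonneg_right (ha i) (hy.1 i)
    _ = M * ∑ i, y i := (Finset.mul_sum ..).symm
    _ ≤ M * t := mul_le_mul_of_nonneg_left hy.2 hM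

lemma ofReal_pow_div_factorial_le_volume_solidSimplex (k : ℕ) {t : ℝ} (ht : 0 ≤ t) :
    ENNReal.ofReal (t ^ k / k !) ≤ volume (solidSimplex (Fin k) t) := by
  induction k generalizing t with
  | zero =>
    have : solidSimplex (Fin 0) t = Set.univ := by ext y; simp [solidSimplex, ht]
    simp [this, volume_pi]
  | succ k ih =>
    let e := MeasurableEquiv.piFinSuccAbove (fun _ : Fin (k + 1) ↦ ℝ) 0
    have hS : MeasurableSet (solidSimplex (Fin (k + 1)) t) :=
      (isCompact_solidSimplex t).isClosed.measurableSet
    have hslice : ∀ a ∈ Set.Icc 0 t,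
        solidSimplex (Fin k) (t - a) ⊆ Prod.mk a ⁻¹' (e.symm ⁻¹' solidSimplex (Fin (k + 1)) t) := by
      intro a ha z hz
      refine ⟨Fin.cases ha.1 hz.1, ?_⟩
      simp only [e, MeasurableEquiv.piFinSuccAbove_symm_apply, Fin.insertNthEquiv,
        Equiv.coe_fn_mk, Fin.insertNth_zero', Fin.sum_cons]
      linarith [hz.2]
    rw [← ((volume_preserving_piFinSuccAbove (fun _ : Fin (k + 1) ↦ ℝ) 0).symm e).measure_preimage
      hS.nullMeasurableSet, Measure.volume_eq_prod, Measure.prod_apply (e.symm.measurable hS)]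
    calc ENNReal.ofReal (t ^ (k + 1) / (k + 1)!)
        = ∫⁻ a in Set.Icc 0 t, ENNReal.ofReal ((t - a) ^ k / k !) := by
          rw [← integral_sub_pow_div_factorial, intervalIntegral.integral_of_le ht,
            ← integral_Icc_eq_integral_Ioc, ofReal_integral_eq_lintegral_ofReal]
          · exact (by fun_prop : Continuous fun a : ℝ ↦ (t - a) ^ k / k !).integrableOn_Icc
          · filter_upwards [self_mem_ae_restrict measurableSet_Icc] with a ha
            have : 0 ≤ t - a := by linarith [ha.2]
            positivity
      _ ≤ ∫⁻ a in Set.Icc 0 t,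
            volume (Prod.mk a ⁻¹' (e.symm ⁻¹' solidSimplex (Fin (k + 1)) t)) :=
          setLIntegral_mono' measurableSet_Icc fun a ha ↦
            (ih (by linarith [ha.2])).trans (measure_mono (hslice a ha))
      _ ≤ _ := setLIntegral_le_lintegral _ _

lemma ofReal_pow_card_div_factorial_le_volume_solidSimplex {t : ℝ} (ht : 0 ≤ t) :
    ENNReal.ofReal (t ^ Fintype.card ι / (Fintype.card ι)!) ≤ volume (solidSimplex ι t) := by
  let e := MeasurableEquiv.piCongrLeft (fun _ ↦ ℝ) (Fintype.equivFin ι)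
  have hpre : e ⁻¹' solidSimplex (Fin (Fintype.card ι)) t = solidSimplex ι t := by
    ext y
    simp only [Set.mem_preimage, solidSimplex, Set.mem_ofPred_eq, e,
      MeasurableEquiv.coe_piCongrLeft, Equiv.piCongrLeft_apply_eq_cast, cast_eq]
    rw [(Fintype.equivFin ι).symm.forall_congr_left, Equiv.sum_comp]
    simp
  rw [← hpre, (volume_measurePreserving_piCongrLeft _ _).measure_preimage
    (isCompact_solidSimplex t).isClosed.measurableSet.nullMeasurableSet]
  exact ofReal_pow_div_factorial_le_volume_solidSimplex _ ht

end SolidSimplex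

lemma factorial_le_sqrt_mul_pow_mul_exp {n : ℕ} (hn : n ≠ 0) :
    (n ! : ℝ) ≤ √n * n ^ n * exp (1 - n) := by
  obtain ⟨m, rfl⟩ := Nat.exists_eq_succ_of_ne_zero hn
  have hseq : Stirling.stirlingSeq (m + 1) ≤ exp 1 / √2 :=
    Stirling.stirlingSeq_one ▸ Stirling.stirlingSeq'_antitone (Nat.zero_le m)
  have hfact : ((m + 1)! : ℝ)
      = Stirling.stirlingSeq (m + 1) * (√(2 * (m + 1 : ℕ)) * ((m + 1 : ℕ) / exp 1) ^ (m + 1)) := by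
    rw [Stirling.stirlingSeq]
    field_simp
  rw [hfact]
  calc _ ≤ exp 1 / √2 * (√(2 * (m + 1 : ℕ)) * ((m + 1 : ℕ) / exp 1) ^ (m + 1)) := by gcongr
    _ = _ := by
      rw [sqrt_mul zero_le_two, div_pow, exp_sub, exp_one_pow]
      field_simp

section Estimator

variable {ι : Type*} [Fintype ι]

/-- The importance-sampling estimator of `ℙ(∑ Xᵢ ≤ 1)` for independent `Xᵢ ~ Exp(lam i)`, at a
sample `y` drawn from `Exp(r)^⊗ι`. -/
noncomputable def isEstimator (r : ℝ) (lam y : ι → ℝ) : ℝ :=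
  (if ∑ i, y i ≤ 1 then 1 else 0) * ∏ i, (lam i * exp (-(lam i) * y i)) / (r * exp (-r * y i))

variable {r : ℝ} {lam : ι → ℝ} {Ω : Type*} [MeasureSpace Ω] {Y : ι → Ω → ℝ}

lemma measurable_isEstimator (r : ℝ) (lam : ι → ℝ) : Measurable (isEstimator r lam) :=
  (Measurable.ite (measurableSet_le (by fun_prop) measurable_const) measurable_const
    measurable_const).mul (by fun_prop)

lemma isEstimator_of_sum_le {y : ι → ℝ} (hy : ∑ i, y i ≤ 1) :
    isEstimator r lam y
      = (∏ i, lam i) / r ^ Fintype.card ι * exp (∑ i, (r - lam i) * y i) := by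
  have hfactor (i : ι) : lam i * exp (-lam i * y i) / (r * exp (-r * y i))
      = lam i / r * exp ((r - lam i) * y i) := by
    rw [mul_div_mul_comm, ← exp_sub]
    ring_nf
  simp_rw [isEstimator, if_pos hy, one_mul, hfactor, Finset.prod_mul_distrib,
    Finset.prod_div_distrib, Finset.prod_const, Finset.card_univ, exp_sum]

lemma prod_exponentialPDFReal_mul_isEstimator_pow {k : ℕ} (hk : k ≠ 0) (y : ι → ℝ) :
    (∏ i, exponentialPDFReal r (y i)) * isEstimator r lam y ^ k
      = (solidSimplex ι 1).indicator (fun y ↦ r ^ Fintype.card ι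
          * ((∏ i, lam i) / r ^ Fintype.card ι) ^ k
          * exp (∑ i, (k * (r - lam i) - r) * y i)) y := by
  by_cases hy : y ∈ solidSimplex ι 1
  · rw [Set.indicator_of_mem hy, prod_exponentialPDFReal_of_nonneg hy.1,
      isEstimator_of_sum_le hy.2, mul_pow, ← exp_nat_mul]
    have hexponent : -(r * ∑ i, y i) + k * ∑ i, (r - lam i) * y i
        = ∑ i, (k * (r - lam i) - r) * y i := by
      rw [Finset.mul_sum, Finset.mul_sum, ← Finset.sum_neg_distrib, ← Finset.sum_add_distrib]
      exact Finset.sum_congr rfl fun i _ ↦ by ring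
    rw [← hexponent, exp_add]
    ring
  rw [Set.indicator_of_notMem hy]
  simp only [solidSimplex, Set.mem_ofPred_eq, not_and_or, not_forall, not_le] at hy
  rcases hy with ⟨i, hi⟩ | hy
  · rw [Finset.prod_eq_zero (Finset.mem_univ i)
      (by simp [exponentialPDFReal, gammaPDFReal, hi.not_ge]), zero_mul]
  · rw [isEstimator, if_neg hy.not_ge, zero_mul, zero_pow hk, mul_zero]

lemma integral_isEstimator_pow (hr : 0 < r) (hYmeas : ∀ i, Measurable (Y i))
    (hYindep : iIndepFun Y ℙ) (hYdist : ∀ i, Measure.map (Y i) ℙ = expMeasure r)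
    {k : ℕ} (hk : k ≠ 0) :
    ∫ ω, isEstimator r lam (fun i ↦ Y i ω) ^ k
      = ∫ y in solidSimplex ι 1, r ^ Fintype.card ι * ((∏ i, lam i) / r ^ Fintype.card ι) ^ k
          * exp (∑ i, (k * (r - lam i) - r) * y i) := by
  rw [integral_comp_eq_integral_prod_exponentialPDFReal hr hYmeas hYindep hYdist
    ((measurable_isEstimator r lam).pow_const k)]
  simp_rw [prod_exponentialPDFReal_mul_isEstimator_pow hk]
  exact integral_indicator (isCompact_solidSimplex 1).isClosed.measurableSet

theorem integral_isEstimator_sq_div_sq_integral_le (hr : 0 < r) (hlam : ∀ i, 0 < lam i)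
    {lamBar lamMin : ℝ} (hBar : IsGreatest (Set.range lam) lamBar)
    (hMin : IsLeast (Set.range lam) lamMin) (h2 : 2 * lamMin ≤ r)
    (hYmeas : ∀ i, Measurable (Y i)) (hYindep : iIndepFun Y ℙ)
    (hYdist : ∀ i, Measure.map (Y i) ℙ = expMeasure r) :
    (∫ ω, isEstimator r lam (fun i ↦ Y i ω) ^ 2) / (∫ ω, isEstimator r lam (fun i ↦ Y i ω)) ^ 2
      ≤ (Fintype.card ι)! * exp (r - 2 * lamMin + 2 * lamBar) / r ^ Fintype.card ι := by
  set c := ∏ i, lam i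
  set A := solidSimplex ι 1
  set v := volume.real A
  have hA : IsCompact A := isCompact_solidSimplex 1
  have hAfin : volume A ≠ ⊤ := hA.measure_lt_top.ne
  have hv : 1 / (Fintype.card ι)! ≤ v := by
    have := ENNReal.toReal_mono hAfin
      (ofReal_pow_card_div_factorial_le_volume_solidSimplex (ι := ι) zero_le_one)
    rwa [one_pow, ENNReal.toReal_ofReal (by positivity)] at this
  have hc : 0 < c := Finset.prod_pos fun i _ ↦ hlam i
  have hBar0 : 0 ≤ lamBar := by
    obtain ⟨i, rfl⟩ := hBar.1
    exact (hlam i).le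
  have hrm : r ^ Fintype.card ι ≠ 0 := pow_ne_zero _ hr.ne'
  have hmean : c * exp (-lamBar) * v ≤ ∫ ω, isEstimator r lam (fun i ↦ Y i ω) := by
    have hfirst := integral_isEstimator_pow (lam := lam) hr hYmeas hYindep hYdist one_ne_zero
    simp only [pow_one, Nat.cast_one, one_mul, sub_sub_cancel_left, mul_div_cancel₀ _ hrm]
      at hfirst
    rw [hfirst]
    refine setIntegral_ge_of_const_le_real hA.isClosed.measurableSet hAfin (fun y hy ↦ ?_)
      (ContinuousOn.integrableOn_compact hA (by fun_prop))
    have hsum := sum_mul_le_of_mem_solidSimplex hy (fun i ↦ hBar.2 ⟨i, rfl⟩) hBar0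
    gcongr
    simp only [neg_mul, Finset.sum_neg_distrib]
    linarith
  have hsecond : ∫ ω, isEstimator r lam (fun i ↦ Y i ω) ^ 2
      ≤ c ^ 2 / r ^ Fintype.card ι * exp (r - 2 * lamMin) * v := by
    rw [integral_isEstimator_pow hr hYmeas hYindep hYdist two_ne_zero]
    calc _ ≤ ∫ _ in A, c ^ 2 / r ^ Fintype.card ι * exp (r - 2 * lamMin) :=
          setIntegral_mono_on (ContinuousOn.integrableOn_compact hA (by fun_prop))
            (integrableOn_const hAfin) hA.isClosed.measurableSet fun y hy ↦ ?_
      _ = _ := by rw [setIntegral_const, smul_eq_mul, mul_comm]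
    have hsum := sum_mul_le_of_mem_solidSimplex hy
      (a := fun i ↦ (2 : ℕ) * (r - lam i) - r)
      (fun i ↦ by push_cast; linarith [hMin.2 ⟨i, rfl⟩])
      (by linarith : 0 ≤ r - 2 * lamMin)
    rw [div_pow, show r ^ Fintype.card ι * (c ^ 2 / (r ^ Fintype.card ι) ^ 2)
      = c ^ 2 / r ^ Fintype.card ι by field_simp]
    gcongr
    linarith
  have hv0 : 0 < v := lt_of_lt_of_le (by positivity) hv
  have hexp : exp (r - 2 * lamMin) = exp (-lamBar) ^ 2 * exp (r - 2 * lamMin + 2 * lamBar) := by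
    rw [sq, ← exp_add, ← exp_add]
    ring_nf
  calc _ ≤ c ^ 2 / r ^ Fintype.card ι * exp (r - 2 * lamMin) * v / (c * exp (-lamBar) * v) ^ 2 :=
        div_le_div₀ (by positivity) hsecond (by positivity)
          (pow_le_pow_left₀ (by positivity) hmean 2)
    _ = c ^ 2 / r ^ Fintype.card ι * exp (r - 2 * lamMin) / ((c * exp (-lamBar)) ^ 2 * v) := by
        field_simp
    _ ≤ c ^ 2 / r ^ Fintype.card ι * exp (r - 2 * lamMin)
          / ((c * exp (-lamBar)) ^ 2 * (1 / (Fintype.card ι)!)) := by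
        gcongr
    _ = _ := by
        rw [hexp]
        field_simp

end Estimator

theorem is_estimator_efficiency_general
    {Ω : Type*} [MeasureSpace Ω]
    (n : ℕ) (lam : Fin n → ℝ) (hlam : ∀ i, 0 < lam i)
    (lamBar lamMin : ℝ)
    (hBar : IsGreatest (Set.range lam) lamBar)
    (hMin : IsLeast (Set.range lam) lamMin)
    (h2 : 2 * lamMin < n)
    (Y : Fin n → Ω → ℝ)
    (hYmeas : ∀ i, Measurable (Y i))
    (hYindep : iIndepFun Y ℙ)
    (hYdist : ∀ i, Measure.map (Y i) ℙ = expMeasure n)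
    (Z : Ω → ℝ)
    (hZ : Z = fun ω => (if ∑ i, Y i ω ≤ 1 then (1 : ℝ) else 0) *
      ∏ i, (lam i * Real.exp (-(lam i) * Y i ω)) / ((n : ℝ) * Real.exp (-(n : ℝ) * Y i ω))) :
    (∫ ω, (Z ω) ^ 2 ∂ℙ) / (∫ ω, Z ω ∂ℙ) ^ 2 ≤
      Real.sqrt n * Real.exp (2 * (lamBar - lamMin) + 1) := by
  obtain ⟨i₀, -⟩ := hMin.1
  have hn : (0 : ℝ) < n := Nat.cast_pos.2 i₀.pos
  have hbound :=
    integral_isEstimator_sq_div_sq_integral_le hn hlam hBar hMin h2.le hYmeas hYindep hYdist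
  rw [Fintype.card_fin] at hbound
  subst hZ
  calc _ ≤ n ! * exp (n - 2 * lamMin + 2 * lamBar) / n ^ n := hbound
    _ ≤ √n * n ^ n * exp (1 - n) * exp (n - 2 * lamMin + 2 * lamBar) / n ^ n := by
        gcongr
        exact factorial_le_sqrt_mul_pow_mul_exp i₀.pos.ne'
    _ = √n * exp (2 * (lamBar - lamMin) + 1) := by
        have : (n : ℝ) ^ n ≠ 0 := pow_ne_zero _ hn.ne'
        rw [mul_assoc, ← exp_add]
        field_simp
        ring_nf

/-- **Bounded relative efficiency of the importance-sampling estimator.**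
If `Y i ~ Exp(n)` are i.i.d., `lamBar = max lamᵢ`, `lamMin = min lamᵢ`, `2 lamMin < n`, and
`Z = 1_{∑ Yᵢ ≤ 1} · ∏ (lamᵢ e^{-lamᵢ Yᵢ}) / (n e^{-n Yᵢ})`, then
`E[Z²] / (E[Z])² ≤ √n · e^{2(lamBar - lamMin) + 1}`. -/
theorem is_estimator_efficiency
    {Ω : Type*} [MeasureSpace Ω] [IsProbabilityMeasure (ℙ : Measure Ω)]
    (n : ℕ) (hn : 1 ≤ n) (lam : Fin n → ℝ) (hlam : ∀ i, 0 < lam i)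
    (lamBar lamMin : ℝ)
    (hBar : IsGreatest (Set.range lam) lamBar)
    (hMin : IsLeast (Set.range lam) lamMin)
    (h2 : 2 * lamMin < n)
    (Y : Fin n → Ω → ℝ)
    (hYmeas : ∀ i, Measurable (Y i))
    (hYindep : iIndepFun Y ℙ)
    (hYdist : ∀ i, Measure.map (Y i) ℙ = expMeasure n)
    (Z : Ω → ℝ)
    (hZ : Z = fun ω => (if ∑ i, Y i ω ≤ 1 then (1 : ℝ) else 0) *
      ∏ i, (lam i * Real.exp (-(lam i) * Y i ω)) / ((n : ℝ) * Real.exp (-(n : ℝ) * Y i ω))) :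
    (∫ ω, (Z ω) ^ 2 ∂ℙ) / (∫ ω, Z ω ∂ℙ) ^ 2 ≤
      Real.sqrt n * Real.exp (2 * (lamBar - lamMin) + 1) :=
  is_estimator_efficiency_general n lam hlam lamBar lamMin hBar hMin h2 Y hYmeas hYindep hYdist Z hZ
end

section
/- Let $n \geq 1$, let $\lambda_1,\dots,\lambda_n > 0$ with $\underline{\lambda} = \min_i \lambda_i$, and assume $2\underline{\lambda} < n$. Let $Y_1,\dots,Y_n$ be i.i.d. exponential random variables with rate $n$ and set $Z = \mathbf{1}_{\{\sum_{i=1}^n Y_i \leq 1\}} \cdot \prod_{i=1}^n \frac{\lambda_i e^{-\lambda_i Y_i}}{n e^{-n Y_i}}$. Then $\mathbb{E}[Z^2] \leq \Big(\frac{\prod_{i=1}^n \lambda_i}{n^n}\Big)^2 \cdot \frac{n^n}{(n-1)!} \cdot \frac{1}{(n - 2\underline{\lambda})^{n}} \cdot I(n, n - 2\underline{\lambda})$, where $I(n,x) = \int_0^x t^{n-1}e^{t}\,dt$. -/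
/-!
On `{∑ Yᵢ ≤ 1}` the likelihood ratio is `(∏ λᵢ / nⁿ) · exp (∑ (n - λᵢ) Yᵢ)`; as the `Yᵢ` are
nonnegative, `Z² ≤ (∏ λᵢ / nⁿ)² · 1_{S ≤ 1} · exp (2 (n - λ_min) S)` with `S = ∑ Yᵢ`.
Convolving densities gives `Exp(r) ∗ Gamma(a, r) = Gamma(a + 1, r)`, so `S ~ Gamma(n, n)` and the
expectation of the bound is `nⁿ/(n-1)! · ∫₀¹ s^(n-1) exp ((n - 2λ_min) s) ds`; the substitution
`t = (n - 2λ_min) s` turns this into the stated expression.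
-/

open MeasureTheory ProbabilityTheory Real Set

theorem withDensity_conv_withDensity {G : Type*} [AddCommGroup G] [MeasurableSpace G]
    [MeasurableAdd₂ G] [MeasurableSub₂ G] (μ : Measure G) [SFinite μ] [μ.IsAddRightInvariant]
    {f g : G → ENNReal} (hf : Measurable f) (hg : Measurable g) :
    μ.withDensity f ∗ μ.withDensity g = μ.withDensity fun t => ∫⁻ x, f x * g (t - x) ∂μ := by
  refine Measure.ext_of_lintegral _ fun φ hφ => ?_
  have hshift (x : G) : ∫⁻ y, g y * φ (x + y) ∂μ = ∫⁻ t, g (t - x) * φ t ∂μ := by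
    rw [← lintegral_add_right_eq_self (fun t => g (t - x) * φ t) x]
    simp [add_comm]
  calc ∫⁻ t, φ t ∂(μ.withDensity f ∗ μ.withDensity g)
      = ∫⁻ x, ∫⁻ t, f x * (g (t - x) * φ t) ∂μ ∂μ := by
        rw [Measure.lintegral_conv hφ, lintegral_withDensity_eq_lintegral_mul _ hf (by fun_prop)]
        refine lintegral_congr fun x => ?_
        rw [Pi.mul_apply, lintegral_withDensity_eq_lintegral_mul _ hg (by fun_prop),
          lintegral_const_mul _ (by fun_prop)]
        exact congrArg (f x * ·) (hshift x)
    _ = ∫⁻ t, (∫⁻ x, f x * g (t - x) ∂μ) * φ t ∂μ := by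
        rw [lintegral_lintegral_swap (by fun_prop)]
        refine lintegral_congr fun t => ?_
        rw [← lintegral_mul_const _ (by fun_prop)]
        simp only [mul_assoc]
    _ = _ := (lintegral_withDensity_eq_lintegral_mul _ (by fun_prop) hφ).symm

theorem integral_sub_rpow {a : ℝ} (ha : 0 < a) (t : ℝ) :
    ∫ x in (0 : ℝ)..t, (t - x) ^ (a - 1) = t ^ a / a := by
  rw [intervalIntegral.integral_comp_sub_left (fun x => x ^ (a - 1)), sub_self, sub_zero,
    integral_rpow (Or.inl (by linarith)), sub_add_cancel, zero_rpow ha.ne', sub_zero]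

theorem integral_pow_mul_exp_mul {δ : ℝ} (hδ : δ ≠ 0) (k : ℕ) (u : ℝ) :
    ∫ x in (0 : ℝ)..u, x ^ k * exp (δ * x)
      = (∫ t in (0 : ℝ)..δ * u, t ^ k * exp t) / δ ^ (k + 1) := by
  have h := intervalIntegral.integral_comp_mul_left (fun t => t ^ k * exp t) hδ (a := 0) (b := u)
  simp only [mul_zero, mul_pow, mul_assoc, smul_eq_mul, intervalIntegral.integral_const_mul] at h
  rw [eq_comm, inv_mul_eq_iff_eq_mul₀ hδ] at h
  rw [eq_div_iff (pow_ne_zero _ hδ), h]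
  ring

theorem integrable_indicator_Iic_exp_comp {Ω : Type*} [MeasurableSpace Ω] {μ : Measure Ω}
    [IsFiniteMeasure μ] {S : Ω → ℝ} (hS : Measurable S) {γ : ℝ} (hγ : 0 ≤ γ) (u : ℝ) :
    Integrable (fun ω => (Iic u).indicator (fun s => exp (γ * s)) (S ω)) μ := by
  refine .of_bound (((by fun_prop : Measurable fun s => exp (γ * s)).indicator
    measurableSet_Iic).comp hS).aestronglyMeasurable (exp (γ * u)) (ae_of_all _ fun ω => ?_)
  rw [norm_indicator_eq_indicator_norm]
  refine indicator_apply_le' (fun hs => ?_) fun _ => (exp_pos _).le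
  rw [norm_of_nonneg (exp_pos _).le]
  exact exp_le_exp.2 (mul_le_mul_of_nonneg_left hs hγ)

theorem sq_prod_likelihoodRatio_le {ι : Type*} [Fintype ι] (lam y : ι → ℝ) {r m : ℝ}
    (hm : ∀ i, m ≤ lam i) (hy : ∀ i, 0 ≤ y i) :
    (∏ i, lam i * exp (-lam i * y i) / (r * exp (-r * y i))) ^ 2
      ≤ ((∏ i, lam i) / r ^ Fintype.card ι) ^ 2 * exp (2 * (r - m) * ∑ i, y i) := by
  have hfactor (i : ι) : lam i * exp (-lam i * y i) / (r * exp (-r * y i))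
      = lam i / r * exp ((r - lam i) * y i) := by
    rw [mul_div_mul_comm, ← exp_sub]
    ring_nf
  have hexponent : ∑ i, (r - lam i) * y i ≤ (r - m) * ∑ i, y i := by
    rw [Finset.mul_sum]
    exact Finset.sum_le_sum fun i _ => mul_le_mul_of_nonneg_right (by linarith [hm i]) (hy i)
  calc _ = ((∏ i, lam i) / r ^ Fintype.card ι * exp (∑ i, (r - lam i) * y i)) ^ 2 := by
        rw [Finset.prod_congr rfl fun i _ => hfactor i, Finset.prod_mul_distrib,
          Finset.prod_div_distrib, Finset.prod_const, Finset.card_univ, exp_sum]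
    _ = ((∏ i, lam i) / r ^ Fintype.card ι) ^ 2 * exp (2 * ∑ i, (r - lam i) * y i) := by
        rw [mul_pow, ← exp_nat_mul]
        norm_num
    _ ≤ _ := mul_le_mul_of_nonneg_left (exp_le_exp.2 (by linarith)) (sq_nonneg _)

namespace ProbabilityTheory

theorem lintegral_exponentialPDF_mul_gammaPDF {a r : ℝ} (ha : 0 < a) (hr : 0 < r) (t : ℝ) :
    ∫⁻ x, exponentialPDF r x * gammaPDF a r (t - x) = gammaPDF (a + 1) r t := by
  rcases lt_or_ge t 0 with ht | ht
  · rw [gammaPDF_of_neg ht, ← lintegral_zero]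
    refine lintegral_congr fun x => ?_
    rcases lt_or_ge x 0 with hx | hx
    · rw [exponentialPDF_of_neg hx, zero_mul]
    · rw [gammaPDF_of_neg (by linarith), mul_zero]
  set c := r ^ (a + 1) / Gamma a * exp (-(r * t)) with hc
  have hpoint (x : ℝ) : exponentialPDF r x * gammaPDF a r (t - x)
      = (Icc 0 t).indicator (fun x => ENNReal.ofReal (c * (t - x) ^ (a - 1))) x := by
    by_cases hx : x ∈ Icc 0 t
    · rw [indicator_of_mem hx, exponentialPDF_of_nonneg hx.1,
        gammaPDF_of_nonneg (sub_nonneg.2 hx.2), ← ENNReal.ofReal_mul (by positivity), hc,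
        rpow_add_one hr.ne']
      congr 1
      have : exp (-(r * x)) * exp (-(r * (t - x))) = exp (-(r * t)) := by
        rw [← exp_add]; ring_nf
      linear_combination (r ^ a / Gamma a * (t - x) ^ (a - 1) * r) * this
    · rw [indicator_of_notMem hx]
      rcases not_and_or.1 hx with hx | hx
      · rw [exponentialPDF_of_neg (not_le.1 hx), zero_mul]
      · rw [gammaPDF_of_neg (by linarith [not_le.1 hx]), mul_zero]
  have hint : IntegrableOn (fun x => c * (t - x) ^ (a - 1)) (Icc 0 t) := by
    rw [← intervalIntegrable_iff_integrableOn_Icc_of_le ht]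
    have h := (intervalIntegral.intervalIntegrable_rpow' (r := a - 1) (a := t) (b := 0)
      (by linarith)).comp_sub_left t
    rw [sub_self, sub_zero] at h
    exact h.const_mul c
  have hnonneg : ∀ᵐ x ∂volume.restrict (Icc 0 t), 0 ≤ c * (t - x) ^ (a - 1) :=
    (ae_restrict_iff' measurableSet_Icc).2 <| ae_of_all _ fun x hx =>
      mul_nonneg (by positivity) (rpow_nonneg (sub_nonneg.2 hx.2) _)
  rw [lintegral_congr hpoint, lintegral_indicator measurableSet_Icc,
    ← ofReal_integral_eq_lintegral_ofReal hint hnonneg, integral_Icc_eq_integral_Ioc,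
    ← intervalIntegral.integral_of_le ht, intervalIntegral.integral_const_mul,
    integral_sub_rpow ha, gammaPDF_of_nonneg ht, add_sub_cancel_right, Gamma_add_one ha.ne', hc]
  congr 1
  field_simp

theorem measurable_gammaPDF (a r : ℝ) : Measurable (gammaPDF a r) :=
  (measurable_gammaPDFReal a r).ennreal_ofReal

theorem expMeasure_conv_gammaMeasure {a r : ℝ} (ha : 0 < a) (hr : 0 < r) :
    expMeasure r ∗ gammaMeasure a r = gammaMeasure (a + 1) r := by
  rw [expMeasure, gammaMeasure, gammaMeasure, gammaMeasure,
    withDensity_conv_withDensity _ (measurable_gammaPDF 1 r) (measurable_gammaPDF a r)]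
  exact congrArg _ (funext (lintegral_exponentialPDF_mul_gammaPDF ha hr))

theorem iIndepFun.map_sum_eq_gammaMeasure {Ω ι : Type*} [MeasurableSpace Ω] {μ : Measure Ω}
    [IsFiniteMeasure μ] {Y : ι → Ω → ℝ} {r : ℝ} (hr : 0 < r) (hmeas : ∀ i, Measurable (Y i))
    (hindep : iIndepFun Y μ) (hY : ∀ i, μ.map (Y i) = expMeasure r) {s : Finset ι}
    (hs : s.Nonempty) : μ.map (fun ω => ∑ i ∈ s, Y i ω) = gammaMeasure s.card r := by
  induction hs using Finset.Nonempty.cons_induction with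
  | singleton i => simpa [expMeasure] using hY i
  | cons i s hi hs ih =>
    have hindep_i : IndepFun (Y i) (fun ω => ∑ j ∈ s, Y j ω) μ := by
      simpa only [Finset.sum_fn] using (hindep.indepFun_finsetSum_of_notMem hmeas hi).symm
    simp_rw [Finset.sum_cons]
    rw [Finset.card_cons, Nat.cast_succ,
      ← expMeasure_conv_gammaMeasure (by exact_mod_cast hs.card_pos) hr, ← ih, ← hY i]
    exact hindep_i.map_add_eq_map_conv_map (hmeas i) (s.measurable_sum fun j _ => hmeas j)

theorem ae_nonneg_of_map_eq_gammaMeasure {Ω : Type*} [MeasurableSpace Ω] {μ : Measure Ω}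
    {X : Ω → ℝ} {a r : ℝ} (hX : AEMeasurable X μ) (h : μ.map X = gammaMeasure a r) :
    ∀ᵐ ω ∂μ, 0 ≤ X ω := by
  refine ae_of_ae_map hX ?_
  rw [h, ae_iff]
  simp only [not_le]
  change gammaMeasure a r (Iio 0) = 0
  rw [gammaMeasure, withDensity_apply _ measurableSet_Iio]
  exact lintegral_gammaPDF_of_nonpos le_rfl

theorem integral_gammaMeasure {E : Type*} [NormedAddCommGroup E] [NormedSpace ℝ E]
    {a r : ℝ} (ha : 0 < a) (hr : 0 < r) (g : ℝ → E) :
    ∫ x, g x ∂gammaMeasure a r = ∫ x, gammaPDFReal a r x • g x := by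
  rw [gammaMeasure, integral_withDensity_eq_integral_toReal_smul (measurable_gammaPDF a r)
    (ae_of_all _ fun _ => ENNReal.ofReal_lt_top)]
  simp only [gammaPDF, ENNReal.toReal_ofReal (gammaPDFReal_nonneg ha hr _)]

theorem gammaPDFReal_natCast {n : ℕ} (hn : 1 ≤ n) (r : ℝ) {x : ℝ} (hx : 0 ≤ x) :
    gammaPDFReal n r x = r ^ n / (n - 1).factorial * x ^ (n - 1) * exp (-(r * x)) := by
  obtain ⟨m, rfl⟩ := Nat.exists_eq_add_of_le' hn
  rw [gammaPDFReal, if_pos hx, rpow_natCast, Nat.add_sub_cancel, Nat.cast_succ,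
    Gamma_nat_eq_factorial, add_sub_cancel_right, rpow_natCast]

theorem setIntegral_Iic_exp_mul_gammaMeasure {n : ℕ} (hn : 1 ≤ n) {r : ℝ} (hr : 0 < r)
    (γ : ℝ) {u : ℝ} (hu : 0 ≤ u) :
    ∫ x in Iic u, exp (γ * x) ∂gammaMeasure n r
      = r ^ n / (n - 1).factorial * ∫ x in (0 : ℝ)..u, x ^ (n - 1) * exp ((γ - r) * x) := by
  have hpoint (x : ℝ) : gammaPDFReal n r x • (Iic u).indicator (fun x => exp (γ * x)) x
      = (Icc 0 u).indicator
        (fun x => r ^ n / (n - 1).factorial * (x ^ (n - 1) * exp ((γ - r) * x))) x := by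
    by_cases hx : x ∈ Icc 0 u
    · rw [indicator_of_mem hx, indicator_of_mem (show x ∈ Iic u from hx.2), smul_eq_mul,
        gammaPDFReal_natCast hn r hx.1, sub_mul, sub_eq_neg_add, exp_add]
      ring
    · rw [indicator_of_notMem hx]
      rcases not_and_or.1 hx with hx | hx
      · simp [gammaPDFReal, not_le.1 hx]
      · rw [indicator_of_notMem (show x ∉ Iic u from hx), smul_zero]
  rw [← integral_indicator measurableSet_Iic,
    integral_gammaMeasure (by exact_mod_cast hn) hr, integral_congr_ae (ae_of_all _ hpoint),
    integral_indicator measurableSet_Icc, integral_Icc_eq_integral_Ioc,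
    ← intervalIntegral.integral_of_le hu, intervalIntegral.integral_const_mul]

theorem iIndepFun.integral_indicator_Iic_exp_sum {Ω ι : Type*} [MeasurableSpace Ω]
    {μ : Measure Ω} [IsFiniteMeasure μ] [Fintype ι] [Nonempty ι] {Y : ι → Ω → ℝ} {r : ℝ}
    (hr : 0 < r) (hmeas : ∀ i, Measurable (Y i)) (hindep : iIndepFun Y μ)
    (hY : ∀ i, μ.map (Y i) = expMeasure r) (γ : ℝ) {u : ℝ} (hu : 0 ≤ u) :
    ∫ ω, (Iic u).indicator (fun s => exp (γ * s)) (∑ i, Y i ω) ∂μ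
      = r ^ Fintype.card ι / (Fintype.card ι - 1).factorial
        * ∫ x in (0 : ℝ)..u, x ^ (Fintype.card ι - 1) * exp ((γ - r) * x) := by
  have hlaw : μ.map (fun ω => ∑ i, Y i ω) = gammaMeasure (Fintype.card ι) r :=
    hindep.map_sum_eq_gammaMeasure hr hmeas hY Finset.univ_nonempty
  have hmeas_g : Measurable ((Iic u).indicator fun s => exp (γ * s)) :=
    (by fun_prop : Measurable fun s => exp (γ * s)).indicator measurableSet_Iic
  rw [← integral_map (Finset.measurable_sum _ fun i _ => hmeas i).aemeasurable
      hmeas_g.aestronglyMeasurable, hlaw, integral_indicator measurableSet_Iic,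
    setIntegral_Iic_exp_mul_gammaMeasure Fintype.card_pos hr γ hu]

end ProbabilityTheory

theorem is_estimator_second_moment_bound_general
    {Ω : Type*} [MeasureSpace Ω] [IsProbabilityMeasure (ℙ : Measure Ω)]
    (n : ℕ) (hn : 1 ≤ n) (lam : Fin n → ℝ)
    (lamMin : ℝ)
    (hMin : IsLeast (Set.range lam) lamMin)
    (h2 : 2 * lamMin < n)
    (Y : Fin n → Ω → ℝ)
    (hYmeas : ∀ i, Measurable (Y i))
    (hYindep : iIndepFun Y ℙ)
    (hYdist : ∀ i, Measure.map (Y i) ℙ = expMeasure n)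
    (Z : Ω → ℝ)
    (hZ : Z = fun ω => (if ∑ i, Y i ω ≤ 1 then (1 : ℝ) else 0) *
      ∏ i, (lam i * Real.exp (-(lam i) * Y i ω)) / ((n : ℝ) * Real.exp (-(n : ℝ) * Y i ω))) :
    ∫ ω, (Z ω) ^ 2 ∂ℙ ≤
      ((∏ i, lam i) / (n : ℝ) ^ n) ^ 2 * ((n : ℝ) ^ n / (Nat.factorial (n - 1) : ℝ)) *
        (1 / ((n : ℝ) - 2 * lamMin) ^ n) *
        ∫ t in (0 : ℝ)..((n : ℝ) - 2 * lamMin), t ^ (n - 1) * Real.exp t := by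
  have hn_pos : (0 : ℝ) < n := by exact_mod_cast hn
  set C := (∏ i, lam i) / (n : ℝ) ^ n
  set α := 2 * ((n : ℝ) - lamMin)
  set g : ℝ → ℝ := (Iic 1).indicator fun s => exp (α * s)
  have hZ_le : ∀ᵐ ω ∂ℙ, Z ω ^ 2 ≤ C ^ 2 * g (∑ i, Y i ω) := by
    filter_upwards [ae_all_iff.2 fun i =>
      ae_nonneg_of_map_eq_gammaMeasure (hYmeas i).aemeasurable (hYdist i)] with ω hY
    by_cases hS : ∑ i, Y i ω ≤ 1
    · simpa [hZ, g, hS] using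
        sq_prod_likelihoodRatio_le lam (Y · ω) (fun i => hMin.2 ⟨i, rfl⟩) hY
    · simp [hZ, g, hS]
  have hg_int : Integrable (fun ω => C ^ 2 * g (∑ i, Y i ω)) ℙ :=
    (integrable_indicator_Iic_exp_comp (Finset.measurable_sum _ fun i _ => hYmeas i)
      (by linarith) 1).const_mul _
  calc _ ≤ ∫ ω, C ^ 2 * g (∑ i, Y i ω) ∂ℙ :=
        integral_mono_of_nonneg (ae_of_all _ fun ω => sq_nonneg _) hg_int hZ_le
    _ = _ := by
        have : Nonempty (Fin n) := ⟨⟨0, hn⟩⟩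
        rw [integral_const_mul, hYindep.integral_indicator_Iic_exp_sum hn_pos hYmeas hYdist α
          zero_le_one, Fintype.card_fin, show α - n = n - 2 * lamMin by ring,
          integral_pow_mul_exp_mul (by linarith) _ _, Nat.sub_add_cancel hn, mul_one]
        ring

/-- **Upper bound on the second moment of the importance-sampling estimator.**
If `Y i ~ Exp(n)` are i.i.d., `lamMin = min lamᵢ`, `2 lamMin < n`, and
`Z = 1_{∑ Yᵢ ≤ 1} · ∏ (lamᵢ e^{-lamᵢ Yᵢ}) / (n e^{-n Yᵢ})`, then
`E[Z²] ≤ (∏ lamᵢ / nⁿ)² · nⁿ/(n-1)! · 1/(n - 2 lamMin)ⁿ · I(n, n - 2 lamMin)`,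
where `I(n,x) = ∫₀ˣ tⁿ⁻¹ eᵗ dt`. -/
theorem is_estimator_second_moment_bound
    {Ω : Type*} [MeasureSpace Ω] [IsProbabilityMeasure (ℙ : Measure Ω)]
    (n : ℕ) (hn : 1 ≤ n) (lam : Fin n → ℝ) (hlam : ∀ i, 0 < lam i)
    (lamMin : ℝ)
    (hMin : IsLeast (Set.range lam) lamMin)
    (h2 : 2 * lamMin < n)
    (Y : Fin n → Ω → ℝ)
    (hYmeas : ∀ i, Measurable (Y i))
    (hYindep : iIndepFun Y ℙ)
    (hYdist : ∀ i, Measure.map (Y i) ℙ = expMeasure n)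
    (Z : Ω → ℝ)
    (hZ : Z = fun ω => (if ∑ i, Y i ω ≤ 1 then (1 : ℝ) else 0) *
      ∏ i, (lam i * Real.exp (-(lam i) * Y i ω)) / ((n : ℝ) * Real.exp (-(n : ℝ) * Y i ω))) :
    ∫ ω, (Z ω) ^ 2 ∂ℙ ≤
      ((∏ i, lam i) / (n : ℝ) ^ n) ^ 2 * ((n : ℝ) ^ n / (Nat.factorial (n - 1) : ℝ)) *
        (1 / ((n : ℝ) - 2 * lamMin) ^ n) *
        ∫ t in (0 : ℝ)..((n : ℝ) - 2 * lamMin), t ^ (n - 1) * Real.exp t :=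
  is_estimator_second_moment_bound_general n hn lam lamMin hMin h2 Y hYmeas hYindep hYdist Z hZ
end

section
/- Let $n \geq 1$ and let $X_1,\dots,X_n$ be independent exponentially distributed random variables with pairwise distinct rates $\lambda_1,\dots,\lambda_n > 0$. Then for every $t \geq 0$, the CDF of the hypoexponential random variable $\sum_{i=1}^n X_i$ satisfies $\mathbb{P}\big(\sum_{i=1}^n X_i \leq t\big) = 1 - \sum_{i=1}^n e^{-\lambda_i t} \prod_{j \neq i} \frac{\lambda_j}{\lambda_j - \lambda_i}$. -/
open MeasureTheory ProbabilityTheory Real Finset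

/-!
If `F_s` is the CDF of `∑ i ∈ s, X i`, independence makes the law of the sum over `insert a s`
the convolution of `Exp(λ_a)` with the law of the sum over `s`, so for `t ≥ 0`
`F_{insert a s}(t) = ∫₀ᵗ λ_a e^{-λ_a z} F_s(t - z) dz` (both laws live on `[0, ∞)`).
By induction on `s` it remains to check that the closed form obeys this recursion: the integral
is elementary, and the coefficient of `e^{-λ_a t}` comes out right by the partial fraction
identity `∑ᵢ ∏_{j ≠ i} λⱼ / (λⱼ - λᵢ) = 1`.
-/

theorem integral_mul_exp_mul_exp_sub {α β : ℝ} (h : α ≠ β) (t : ℝ) :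
    ∫ z in (0 : ℝ)..t, α * exp (-α * z) * exp (-β * (t - z)) =
      α / (α - β) * (exp (-β * t) - exp (-α * t)) := by
  have hαβ : β - α ≠ 0 := sub_ne_zero.2 h.symm
  have hderiv : ∀ z ∈ Set.uIcc 0 t, HasDerivAt (fun z => α / (β - α) * exp (-α * z - β * (t - z)))
      (α * exp (-α * z) * exp (-β * (t - z))) z := by
    intro z _
    have hlin : HasDerivAt (fun z => -α * z - β * (t - z)) (β - α) z :=
      (((hasDerivAt_id z).const_mul (-α)).sub
        (((hasDerivAt_id z).const_sub t).const_mul β)).congr_deriv (by ring)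
    refine (hlin.exp.const_mul (α / (β - α))).congr_deriv ?_
    rw [sub_eq_add_neg (-α * z), exp_add]
    field_simp
  rw [intervalIntegral.integral_eq_sub_of_hasDerivAt hderiv
    ((by fun_prop : Continuous _).intervalIntegrable _ _),
    show α / (α - β) = - (α / (β - α)) by rw [← neg_sub, div_neg]]
  ring_nf

/-- Lagrange interpolation of the constant `1` at the nodes `v i`, evaluated at `0`. -/
theorem sum_prod_div_sub_eq_one {ι : Type*} [DecidableEq ι] {s : Finset ι} {v : ι → ℝ}
    (hs : s.Nonempty) (hv : Set.InjOn v s) :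
    ∑ i ∈ s, ∏ j ∈ s.erase i, v j / (v j - v i) = 1 := by
  have h := congrArg (Polynomial.eval 0) (Lagrange.sum_basis hv hs)
  rw [Polynomial.eval_finsetSum, Polynomial.eval_one] at h
  rw [← h]
  refine Finset.sum_congr rfl fun i _ => ?_
  rw [Lagrange.basis, Polynomial.eval_prod]
  refine Finset.prod_congr rfl fun j _ => ?_
  simp only [Lagrange.basisDivisor, Polynomial.eval_mul, Polynomial.eval_C, Polynomial.eval_sub,
    Polynomial.eval_X]
  rw [zero_sub, mul_comm, ← div_eq_mul_inv, ← neg_div_neg_eq, neg_sub]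

section Hypoexponential

variable {ι : Type*} [DecidableEq ι] (lam : ι → ℝ)

noncomputable def hypoexpCoeff (s : Finset ι) (i : ι) : ℝ :=
  ∏ j ∈ s.erase i, lam j / (lam j - lam i)

noncomputable def hypoexpCDF (s : Finset ι) (t : ℝ) : ℝ :=
  1 - ∑ i ∈ s, exp (-lam i * t) * hypoexpCoeff lam s i

variable {lam} {s : Finset ι} {a : ι}

theorem hypoexpCoeff_insert_of_mem (ha : a ∉ s) {i : ι} (hi : i ∈ s) :
    hypoexpCoeff lam (insert a s) i = lam a / (lam a - lam i) * hypoexpCoeff lam s i := by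
  rw [hypoexpCoeff, erase_insert_of_ne (ne_of_mem_of_not_mem hi ha).symm,
    prod_insert (fun h => ha (mem_of_mem_erase h)), hypoexpCoeff]

theorem hypoexpCoeff_insert_self (ha : a ∉ s) (hlam : Set.InjOn lam (insert a s : Finset ι)) :
    hypoexpCoeff lam (insert a s) a =
      1 - ∑ i ∈ s, lam a / (lam a - lam i) * hypoexpCoeff lam s i := by
  have h := sum_prod_div_sub_eq_one (insert_nonempty a s) hlam
  rw [sum_insert ha] at h
  rw [eq_sub_iff_add_eq, ← h, ← sum_congr rfl fun i hi => hypoexpCoeff_insert_of_mem ha hi]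
  rfl

theorem integral_mul_exp_mul_hypoexpCDF_sub (ha : a ∉ s)
    (hlam : Set.InjOn lam (insert a s : Finset ι)) (ha0 : lam a ≠ 0) (t : ℝ) :
    ∫ z in (0 : ℝ)..t, lam a * exp (-lam a * z) * hypoexpCDF lam s (t - z) =
      hypoexpCDF lam (insert a s) t := by
  have hne : ∀ i ∈ s, lam a ≠ lam i := fun i hi h =>
    ne_of_mem_of_not_mem hi ha (hlam (by simp [hi]) (by simp) h.symm)
  -- the constant term `1` of `hypoexpCDF` is treated as the exponential of rate `0`
  have hexpand : ∀ z, lam a * exp (-lam a * z) * hypoexpCDF lam s (t - z) =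
      lam a * exp (-lam a * z) * exp (-0 * (t - z)) -
        ∑ i ∈ s, hypoexpCoeff lam s i * (lam a * exp (-lam a * z) * exp (-lam i * (t - z))) := by
    intro z
    rw [hypoexpCDF, mul_sub, mul_sum, neg_zero, zero_mul, exp_zero, mul_one]
    exact congrArg _ (sum_congr rfl fun i _ => by ring)
  have hint : ∀ c β : ℝ, IntervalIntegrable
      (fun z => c * (lam a * exp (-lam a * z) * exp (-β * (t - z)))) volume 0 t :=
    fun _ _ => Continuous.intervalIntegrable (by fun_prop) _ _
  simp only [hexpand]
  rw [intervalIntegral.integral_sub (by simpa using hint 1 0)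
      (Continuous.intervalIntegrable (by fun_prop) _ _),
    intervalIntegral.integral_finsetSum fun i _ => hint _ _]
  simp only [intervalIntegral.integral_const_mul]
  rw [integral_mul_exp_mul_exp_sub (β := 0) ha0,
    sum_congr rfl fun i hi => by rw [integral_mul_exp_mul_exp_sub (hne i hi)],
    hypoexpCDF, sum_insert ha, hypoexpCoeff_insert_self ha hlam]
  have hsum : ∑ i ∈ s, hypoexpCoeff lam s i *
        (lam a / (lam a - lam i) * (exp (-lam i * t) - exp (-lam a * t))) =
      ∑ i ∈ s, exp (-lam i * t) * hypoexpCoeff lam (insert a s) i -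
        exp (-lam a * t) * ∑ i ∈ s, lam a / (lam a - lam i) * hypoexpCoeff lam s i := by
    rw [mul_sum, ← sum_sub_distrib]
    exact sum_congr rfl fun i hi => by rw [hypoexpCoeff_insert_of_mem ha hi]; ring
  rw [hsum, sub_zero, div_self ha0, neg_zero, zero_mul, exp_zero]
  ring

end Hypoexponential

theorem MeasureTheory.Measure.conv_apply_Iic (μ ν : Measure ℝ) [SFinite ν] (t : ℝ) :
    (μ ∗ ν) (Set.Iic t) = ∫⁻ x, ν (Set.Iic (t - x)) ∂μ := by
  rw [← lintegral_indicator_one measurableSet_Iic,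
    Measure.lintegral_conv (measurable_one.indicator measurableSet_Iic)]
  refine lintegral_congr fun x => ?_
  rw [← lintegral_indicator_one measurableSet_Iic]
  refine lintegral_congr fun y => ?_
  simp only [Set.indicator, Set.mem_Iic, le_sub_iff_add_le', Pi.one_apply]

theorem ae_nonneg_expMeasure (r : ℝ) : ∀ᵐ x ∂expMeasure r, 0 ≤ x := by
  refine (ae_withDensity_iff (measurable_exponentialPDFReal r).ennreal_ofReal).2
    (ae_of_all _ fun x hx => ?_)
  by_contra hneg
  exact hx (exponentialPDF_of_neg (not_le.1 hneg))

theorem cdf_eq_zero_of_ae_nonneg {ν : Measure ℝ} [IsProbabilityMeasure ν] (hν : ∀ᵐ x ∂ν, 0 ≤ x)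
    {u : ℝ} (hu : u < 0) : cdf ν u = 0 := by
  rw [cdf_eq_real, measureReal_def, ENNReal.toReal_eq_zero_iff]
  refine Or.inl (measure_mono_null ?_ (ae_iff.1 hν))
  exact fun x (hx : x ≤ u) => not_le.2 (hx.trans_lt hu)

theorem cdf_expMeasure_conv {r : ℝ} (hr : 0 < r) (ν : Measure ℝ) [IsProbabilityMeasure ν]
    (hν : ∀ᵐ x ∂ν, 0 ≤ x) {t : ℝ} (ht : 0 ≤ t) :
    cdf (expMeasure r ∗ ν) t = ∫ z in (0 : ℝ)..t, r * exp (-r * z) * cdf ν (t - z) := by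
  have := isProbabilityMeasure_expMeasure hr
  set g : ℝ → ℝ := fun z => r * exp (-r * z) * cdf ν (t - z)
  have hg_nonneg : ∀ z, 0 ≤ g z := fun z => by have := cdf_nonneg ν (t - z); positivity
  have hg_int : IntegrableOn g (Set.Icc 0 t) := by
    have hanti : AntitoneOn (fun z => cdf ν (t - z)) (Set.Icc 0 t) :=
      fun x _ y _ hxy => monotone_cdf ν (by linarith)
    exact (hanti.integrableOn_isCompact isCompact_Icc).continuousOn_mul (by fun_prop)
      isCompact_Icc
  have hpointwise : ∀ z, exponentialPDF r z * ν (Set.Iic (t - z)) =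
      (Set.Icc 0 t).indicator (fun z => ENNReal.ofReal (g z)) z := by
    intro z
    rcases lt_or_ge z 0 with hz | hz
    · simp [exponentialPDF_of_neg hz, hz.not_ge]
    rcases le_or_gt z t with hzt | hzt
    · rw [Set.indicator_of_mem (Set.mem_Icc.2 ⟨hz, hzt⟩), exponentialPDF_of_nonneg hz, ← ofReal_cdf,
        ← ENNReal.ofReal_mul (by positivity)]
      simp only [g, neg_mul]
    · rw [← ofReal_cdf, cdf_eq_zero_of_ae_nonneg hν (by linarith), ENNReal.ofReal_zero, mul_zero,
        Set.indicator_of_notMem fun h => hzt.not_ge h.2]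
  have hlintegral : (expMeasure r ∗ ν) (Set.Iic t) = ENNReal.ofReal (∫ z in Set.Icc 0 t, g z) := by
    have hmeas : Measurable fun z => ν (Set.Iic (t - z)) :=
      Antitone.measurable fun x y hxy => measure_mono (Set.Iic_subset_Iic.2 (by linarith))
    rw [Measure.conv_apply_Iic, show expMeasure r = volume.withDensity (exponentialPDF r) from rfl,
      lintegral_withDensity_eq_lintegral_mul _ (f := exponentialPDF r)
        (measurable_exponentialPDFReal r).ennreal_ofReal hmeas]
    simp only [Pi.mul_apply, hpointwise]
    rw [lintegral_indicator measurableSet_Icc,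
      ofReal_integral_eq_lintegral_ofReal hg_int (ae_of_all _ hg_nonneg)]
  rw [cdf_eq_real, measureReal_def, hlintegral, ENNReal.toReal_ofReal
    (setIntegral_nonneg measurableSet_Icc fun z _ => hg_nonneg z),
    intervalIntegral.integral_of_le ht, integral_Icc_eq_integral_Ioc]

section Independent

variable {Ω ι : Type*} [MeasurableSpace Ω] {μ : Measure Ω} {X : ι → Ω → ℝ}

theorem ae_nonneg_map_sum (hXmeas : ∀ i, Measurable (X i)) (hX : ∀ i, ∀ᵐ ω ∂μ, 0 ≤ X i ω)
    (s : Finset ι) : ∀ᵐ x ∂(Measure.map (∑ i ∈ s, X i) μ), 0 ≤ x := by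
  refine (ae_map_iff (by fun_prop : Measurable (∑ i ∈ s, X i)).aemeasurable
    measurableSet_Ici).2 ?_
  filter_upwards [(Filter.eventually_all_finset s).2 fun i _ => hX i] with ω hω
  rw [Finset.sum_apply]
  exact sum_nonneg hω

theorem cdf_map_sum_eq_hypoexpCDF [IsProbabilityMeasure μ] [DecidableEq ι] {lam : ι → ℝ}
    (hlam : ∀ i, 0 < lam i) (hinj : Function.Injective lam) (hXmeas : ∀ i, Measurable (X i))
    (hXindep : iIndepFun X μ) (hXdist : ∀ i, Measure.map (X i) μ = expMeasure (lam i))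
    (s : Finset ι) {t : ℝ} (ht : 0 ≤ t) :
    cdf (Measure.map (∑ i ∈ s, X i) μ) t = hypoexpCDF lam s t := by
  induction s using Finset.induction_on generalizing t with
  | empty =>
    rw [sum_empty, Pi.zero_def, Measure.map_const, measure_univ, one_smul, cdf_eq_real,
      measureReal_def, Measure.dirac_apply_of_mem (Set.mem_Iic.2 ht)]
    simp [hypoexpCDF]
  | @insert a s ha ih =>
    have hS : Measurable (∑ i ∈ s, X i) := by fun_prop
    have := Measure.isProbabilityMeasure_map (μ := μ) hS.aemeasurable
    have hS_nonneg := ae_nonneg_map_sum hXmeas (fun i => ae_of_ae_map (hXmeas i).aemeasurable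
      ((hXdist i).symm ▸ ae_nonneg_expMeasure (lam i))) s
    have hlaw : Measure.map (∑ i ∈ insert a s, X i) μ =
        expMeasure (lam a) ∗ Measure.map (∑ i ∈ s, X i) μ := by
      rw [sum_insert ha, ← hXdist a]
      exact (hXindep.indepFun_finsetSum_of_notMem hXmeas ha).symm.map_add_eq_map_conv_map
        (hXmeas a) hS
    rw [hlaw, cdf_expMeasure_conv (hlam a) _ hS_nonneg ht,
      ← integral_mul_exp_mul_hypoexpCDF_sub ha hinj.injOn (hlam a).ne' t]
    refine intervalIntegral.integral_congr fun z hz => ?_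
    rw [Set.uIcc_of_le ht] at hz
    simp only [ih (sub_nonneg.2 hz.2)]

end Independent

theorem hypoexponential_cdf_closed_form_general
    {Ω : Type*} [MeasureSpace Ω] [IsProbabilityMeasure (ℙ : Measure Ω)]
    (n : ℕ) (lam : Fin n → ℝ) (hlam : ∀ i, 0 < lam i)
    (hdistinct : ∀ i j, i ≠ j → lam i ≠ lam j)
    (X : Fin n → Ω → ℝ)
    (hXmeas : ∀ i, Measurable (X i))
    (hXindep : iIndepFun X ℙ)
    (hXdist : ∀ i, Measure.map (X i) ℙ = expMeasure (lam i))
    (t : ℝ) (ht : 0 ≤ t) :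
    (ℙ {ω | ∑ i, X i ω ≤ t}).toReal =
      1 - ∑ i, Real.exp (-(lam i) * t) *
        ∏ j ∈ Finset.univ.erase i, lam j / (lam j - lam i) := by
  have hinj : Function.Injective lam := fun i j => not_imp_not.1 (hdistinct i j)
  have hS : Measurable (∑ i, X i) := by fun_prop
  have := Measure.isProbabilityMeasure_map (μ := ℙ) hS.aemeasurable
  have hpre : (∑ i, X i) ⁻¹' Set.Iic t = {ω | ∑ i, X i ω ≤ t} := by
    ext ω
    simp [Finset.sum_apply]
  rw [← hpre, ← measureReal_def, ← map_measureReal_apply hS measurableSet_Iic, ← cdf_eq_real,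
    cdf_map_sum_eq_hypoexpCDF hlam hinj hXmeas hXindep hXdist univ ht]
  rfl

/-- **Closed-form hypoexponential CDF for pairwise distinct rates.**
If `X i ~ Exp(lam i)` are independent with pairwise distinct rates `lam i > 0`, then for all
`t ≥ 0`, `P(∑ Xᵢ ≤ t) = 1 - ∑ᵢ e^{-lamᵢ t} ∏_{j ≠ i} lamⱼ / (lamⱼ - lamᵢ)`. -/
theorem hypoexponential_cdf_closed_form
    {Ω : Type*} [MeasureSpace Ω] [IsProbabilityMeasure (ℙ : Measure Ω)]
    (n : ℕ) (hn : 1 ≤ n) (lam : Fin n → ℝ) (hlam : ∀ i, 0 < lam i)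
    (hdistinct : ∀ i j, i ≠ j → lam i ≠ lam j)
    (X : Fin n → Ω → ℝ)
    (hXmeas : ∀ i, Measurable (X i))
    (hXindep : iIndepFun X ℙ)
    (hXdist : ∀ i, Measure.map (X i) ℙ = expMeasure (lam i))
    (t : ℝ) (ht : 0 ≤ t) :
    (ℙ {ω | ∑ i, X i ω ≤ t}).toReal =
      1 - ∑ i, Real.exp (-(lam i) * t) *
        ∏ j ∈ Finset.univ.erase i, lam j / (lam j - lam i) :=
  hypoexponential_cdf_closed_form_general n lam hlam hdistinct X hXmeas hXindep hXdist t ht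
end
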